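/- arXiv:0711.3688 — 3 statements merged into one kernel-verified Lean document; each statement's English description precedes it below -/
import Mathlib

section
/- Let Ω ⊆ ℝ^d be open and (u_ε)_{ε∈(0,1]} a moderate family of smooth functions on Ω. Then the following are equivalent: (a) there exists a negligible family (n_ε) such that (u_ε − n_ε) satisfies the G^∞-estimates: for every compact K ⊆ Ω there is m ∈ ℕ such that for every l ∈ ℕ, p_{K,l}(u_ε − n_ε) = o(ε^{−m}) as ε → 0; (b) for every x ∈ Ω there exist a real r ≥ 0, an open neighbourhood V ⊆ Ω of x and f ∈ C^∞(V) such that ε^r u_ε|_V → f in C^∞(V) as ε → 0. -/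
/-!
(a) ⇒ (b): on a closed ball `B ⊆ Ω` around `x`, the estimate `p_{B,l}(u_ε - n_ε) = o(ε^{-m})`
and the negligibility of `n_ε` give `p_{B,l}(u_ε) = o(ε^{-m})`, hence `ε^m u_ε → 0` in
`C^∞` of the open ball.

(b) ⇒ (a), with `n_ε = 0`: near each point `ε^r ∂^α u_ε` converges, so it stays bounded and
`∂^α u_ε = O(ε^{-r}) = o(ε^{-m})` for every `m > r`. Compactness of `K` makes a single `m`
work on all of `K`, and finitely many multi-indices of length `≤ l` a single `ε₀`.
-/

open Real Topology

noncomputable section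

/-- Euclidean `d`-space. -/
abbrev Euc (d : ℕ) : Type := EuclideanSpace ℝ (Fin d)

/-- Partial derivative in the `i`-th coordinate direction. -/
noncomputable def pderivE {d : ℕ} (i : Fin d) (f : Euc d → ℝ) : Euc d → ℝ :=
  fun x => fderiv ℝ f x (EuclideanSpace.single i (1 : ℝ))

/-- Iterated partial derivative `∂^α` along a list of coordinate directions
(a multi-index `α`, with `|α| = α.length`). -/
noncomputable def mderiv {d : ℕ} : List (Fin d) → (Euc d → ℝ) → Euc d → ℝ
  | [], f => f
  | i :: α, f => pderivE i (mderiv α f)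

/-- A moderate family `(u_ε)_{ε ∈ (0,1]}` of smooth functions on `Ω`. -/
def Moderate {d : ℕ} (Ω : Set (Euc d)) (u : ℝ → Euc d → ℝ) : Prop :=
  ∀ K ⊆ Ω, IsCompact K → ∀ l : ℕ, ∃ N : ℕ, ∃ C : ℝ, ∃ ε₀ > (0:ℝ),
    ∀ ε : ℝ, 0 < ε → ε < ε₀ → ∀ α : List (Fin d), α.length ≤ l →
      ∀ x ∈ K, |mderiv α (u ε) x| ≤ C * ε ^ (-(N : ℝ))

/-- A negligible family `(u_ε)_{ε ∈ (0,1]}` of smooth functions on `Ω`. -/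
def Negligible {d : ℕ} (Ω : Set (Euc d)) (u : ℝ → Euc d → ℝ) : Prop :=
  ∀ K ⊆ Ω, IsCompact K → ∀ l m : ℕ, ∃ C : ℝ, ∃ ε₀ > (0:ℝ),
    ∀ ε : ℝ, 0 < ε → ε < ε₀ → ∀ α : List (Fin d), α.length ≤ l →
      ∀ x ∈ K, |mderiv α (u ε) x| ≤ C * ε ^ (m : ℝ)

open Filter Metric

lemma eventually_nhdsGT_iff_exists_forall {a : ℝ} {P : ℝ → Prop} :
    (∀ᶠ x in 𝓝[>] a, P x) ↔ ∃ b > a, ∀ x : ℝ, a < x → x < b → P x := by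
  simp [Filter.Eventually, mem_nhdsGT_iff_exists_Ioo_subset, Set.subset_def]

lemma eventually_mul_rpow_lt (C : ℝ) {s c : ℝ} (hs : 0 < s) (hc : 0 < c) :
    ∀ᶠ ε in 𝓝[>] (0:ℝ), C * ε ^ s < c := by
  have h : Tendsto (fun ε : ℝ => C * ε ^ s) (𝓝 0) (𝓝 (C * 0 ^ s)) :=
    tendsto_const_nhds.mul (continuousAt_rpow_const 0 s (Or.inr hs.le)).tendsto
  rw [zero_rpow hs.ne', mul_zero] at h
  exact (h.mono_left nhdsWithin_le_nhds).eventually_lt_const hc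

section MDeriv

variable {d : ℕ}

lemma mderiv_const_mul (α : List (Fin d)) (f : Euc d → ℝ) (c : ℝ) :
    mderiv α (fun y => c * f y) = fun y => c * mderiv α f y := by
  induction α with
  | nil => rfl
  | cons i α ih =>
    funext x
    simp only [mderiv, pderivE, ih]
    rw [show (fun y => c * mderiv α f y) = c • mderiv α f from rfl, fderiv_const_smul_field]
    rfl

lemma mderiv_zero (α : List (Fin d)) : mderiv α (fun _ => (0:ℝ)) = fun _ => 0 := by
  simpa using mderiv_const_mul α (fun _ => 0) 0

variable {s : Set (Euc d)} {f g : Euc d → ℝ}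

lemma contDiffOn_mderiv (hs : IsOpen s) (hf : ContDiffOn ℝ (⊤:ℕ∞) f s) (α : List (Fin d)) :
    ContDiffOn ℝ (⊤:ℕ∞) (mderiv α f) s := by
  induction α with
  | nil => exact hf
  | cons i α ih => exact (ih.fderiv_of_isOpen hs (by simp)).clm_apply contDiffOn_const

lemma mderiv_add (hs : IsOpen s) (hf : ContDiffOn ℝ (⊤:ℕ∞) f s)
    (hg : ContDiffOn ℝ (⊤:ℕ∞) g s) (α : List (Fin d)) {x : Euc d} (hx : x ∈ s) :
    mderiv α (fun y => f y + g y) x = mderiv α f x + mderiv α g x := by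
  induction α generalizing x with
  | nil => rfl
  | cons i α ih =>
    have hdiff : ∀ {h : Euc d → ℝ}, ContDiffOn ℝ (⊤:ℕ∞) h s →
        DifferentiableAt ℝ (mderiv α h) x := fun hh =>
      ((contDiffOn_mderiv hs hh α).contDiffAt (hs.mem_nhds hx)).differentiableAt (by simp)
    have hev : mderiv α (fun y => f y + g y) =ᶠ[𝓝 x] fun y => mderiv α f y + mderiv α g y :=
      eventually_of_mem (hs.mem_nhds hx) fun y hy => ih hy
    simp only [mderiv, pderivE]
    rw [hev.fderiv_eq, fderiv_fun_add (hdiff hf) (hdiff hg)]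
    rfl

lemma exists_bound_mderiv (hs : IsOpen s) (hf : ContDiffOn ℝ (⊤:ℕ∞) f s)
    {K : Set (Euc d)} (hKs : K ⊆ s) (hK : IsCompact K) (α : List (Fin d)) :
    ∃ B, ∀ y ∈ K, |mderiv α f y| ≤ B :=
  hK.exists_bound_of_continuousOn ((contDiffOn_mderiv hs hf α).continuousOn.mono hKs)

end MDeriv

/-- The `G^∞`-estimate with exponent `m` on `K`: `p_{K,l}(v_ε) = o(ε^{-m})` for every `l`. -/
def GInftyEstimate {d : ℕ} (K : Set (Euc d)) (m : ℝ) (v : ℝ → Euc d → ℝ) : Prop :=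
  ∀ α : List (Fin d), ∀ c > (0:ℝ), ∀ᶠ ε in 𝓝[>] (0:ℝ),
    ∀ x ∈ K, |mderiv α (v ε) x| ≤ c * ε ^ (-m)

namespace GInftyEstimate

variable {d : ℕ} {K L : Set (Euc d)} {m : ℝ} {v w : ℝ → Euc d → ℝ}

lemma iff_forall_length_le : GInftyEstimate K m v ↔ ∀ l : ℕ, ∀ c > (0:ℝ), ∃ ε₀ > (0:ℝ),
    ∀ ε : ℝ, 0 < ε → ε < ε₀ → ∀ α : List (Fin d), α.length ≤ l →
      ∀ x ∈ K, |mderiv α (v ε) x| ≤ c * ε ^ (-m) := by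
  simp only [← eventually_nhdsGT_iff_exists_forall]
  refine ⟨fun h l c hc => ?_, fun h α c hc => ?_⟩
  · have hfin : {α : List (Fin d) | α.length ≤ l}.Finite := List.finite_length_le _ l
    exact (hfin.eventually_all.2 fun α _ => h α c hc).mono fun ε hε α hα => hε α hα
  · exact (h α.length c hc).mono fun ε hε => hε α le_rfl

lemma mono (h : GInftyEstimate L m v) (hKL : K ⊆ L) : GInftyEstimate K m v :=
  fun α c hc => (h α c hc).mono fun _ hε x hx => hε x (hKL hx)

lemma biUnion {ι : Type*} {t : Finset ι} {L : ι → Set (Euc d)}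
    (h : ∀ i ∈ t, GInftyEstimate (L i) m v) : GInftyEstimate (⋃ i ∈ t, L i) m v := by
  intro α c hc
  filter_upwards [(eventually_all_finset t).2 fun i hi => h i hi α c hc] with ε hε x hx
  obtain ⟨i, hi, hxi⟩ := Set.mem_iUnion₂.1 hx
  exact hε i hi x hxi

lemma add {Ω : Set (Euc d)} (hΩ : IsOpen Ω) (hKΩ : K ⊆ Ω)
    (hvw : ∀ᶠ ε in 𝓝[>] (0:ℝ),
      ContDiffOn ℝ (⊤:ℕ∞) (v ε) Ω ∧ ContDiffOn ℝ (⊤:ℕ∞) (w ε) Ω)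
    (hv : GInftyEstimate K m v) (hw : GInftyEstimate K m w) :
    GInftyEstimate K m (fun ε y => v ε y + w ε y) := by
  intro α c hc
  filter_upwards [hvw, hv α (c / 2) (half_pos hc), hw α (c / 2) (half_pos hc)]
    with ε ⟨hvε, hwε⟩ hvb hwb x hx
  rw [mderiv_add hΩ hvε hwε α (hKΩ hx)]
  calc |mderiv α (v ε) x + mderiv α (w ε) x|
      ≤ |mderiv α (v ε) x| + |mderiv α (w ε) x| := abs_add_le _ _
    _ ≤ c / 2 * ε ^ (-m) + c / 2 * ε ^ (-m) := add_le_add (hvb x hx) (hwb x hx)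
    _ = c * ε ^ (-m) := by ring

lemma rpow_mul_le (h : GInftyEstimate K m v) (α : List (Fin d)) {δ : ℝ} (hδ : 0 < δ) :
    ∀ᶠ ε in 𝓝[>] (0:ℝ), ∀ y ∈ K, |mderiv α (fun z => ε ^ m * v ε z) y| ≤ δ := by
  filter_upwards [h α δ hδ, self_mem_nhdsWithin] with ε hε (hε0 : 0 < ε) y hy
  have hεm : 0 < ε ^ m := rpow_pos_of_pos hε0 m
  calc |mderiv α (fun z => ε ^ m * v ε z) y|
      = ε ^ m * |mderiv α (v ε) y| := by
        rw [mderiv_const_mul, abs_mul, abs_of_pos hεm]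
    _ ≤ ε ^ m * (δ * ε ^ (-m)) := mul_le_mul_of_nonneg_left (hε y hy) hεm.le
    _ = δ := by rw [rpow_neg hε0.le]; field_simp

end GInftyEstimate

lemma Negligible.gInftyEstimate {d : ℕ} {Ω K : Set (Euc d)} {n : ℝ → Euc d → ℝ}
    (hn : Negligible Ω n) (hKΩ : K ⊆ Ω) (hK : IsCompact K) (m : ℝ) : GInftyEstimate K m n := by
  intro α c hc
  -- a negligible family is `O(ε^k)` for some `k > -m`
  set k : ℕ := ⌊-m⌋₊ + 1
  have hkm : 0 < k + m := by
    have := Nat.lt_floor_add_one (-m)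
    push_cast [k]; linarith
  obtain ⟨C, hC⟩ := hn K hKΩ hK α.length k
  filter_upwards [eventually_nhdsGT_iff_exists_forall.2 hC, eventually_mul_rpow_lt C hkm hc,
    self_mem_nhdsWithin] with ε hε hsmall (hε0 : 0 < ε) x hx
  calc |mderiv α (n ε) x| ≤ C * ε ^ (k : ℝ) := hε α le_rfl x hx
    _ = C * ε ^ ((k : ℝ) + m) * ε ^ (-m) := by
        rw [mul_assoc, ← rpow_add hε0, add_neg_cancel_right]
    _ ≤ c * ε ^ (-m) := by gcongr

lemma negligible_zero {d : ℕ} (Ω : Set (Euc d)) : Negligible Ω fun _ _ => 0 :=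
  fun _ _ _ _ _ => ⟨0, 1, one_pos, fun _ _ _ α _ x _ => by simp [mderiv_zero]⟩

lemma gInftyEstimate_of_tendsto_rpow_mul {d : ℕ} {K : Set (Euc d)} {r m : ℝ} (hrm : r < m)
    {u : ℝ → Euc d → ℝ} {f : Euc d → ℝ}
    (hf : ∀ α : List (Fin d), ∃ B, ∀ y ∈ K, |mderiv α f y| ≤ B)
    (hconv : ∀ α : List (Fin d), ∀ δ > (0:ℝ), ∀ᶠ ε in 𝓝[>] (0:ℝ),
      ∀ y ∈ K, |mderiv α (fun z => ε ^ r * u ε z) y - mderiv α f y| ≤ δ) :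
    GInftyEstimate K m u := by
  intro α c hc
  obtain ⟨B, hB⟩ := hf α
  filter_upwards [hconv α 1 one_pos, eventually_mul_rpow_lt (B + 1) (sub_pos.2 hrm) hc,
    self_mem_nhdsWithin] with ε hε hsmall (hε0 : 0 < ε) y hy
  have hbound : ε ^ r * |mderiv α (u ε) y| ≤ B + 1 := by
    have := abs_sub_abs_le_abs_sub (ε ^ r * mderiv α (u ε) y) (mderiv α f y)
    rw [mderiv_const_mul] at hε
    rw [abs_mul, abs_of_pos (rpow_pos_of_pos hε0 r)] at this
    linarith [hε y hy, hB y hy]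
  calc |mderiv α (u ε) y| = ε ^ (m - r) * (ε ^ r * |mderiv α (u ε) y|) * ε ^ (-m) := by
        rw [← mul_assoc, ← rpow_add hε0, mul_comm, ← mul_assoc, ← rpow_add hε0]
        simp
    _ ≤ ε ^ (m - r) * (B + 1) * ε ^ (-m) := by gcongr
    _ ≤ c * ε ^ (-m) := by rw [mul_comm (ε ^ (m - r))]; gcongr

lemma IsCompact.exists_gInftyEstimate {d : ℕ} {K : Set (Euc d)} (hK : IsCompact K)
    {v : ℝ → Euc d → ℝ}
    (hloc : ∀ x ∈ K, ∃ r : ℝ, ∃ U ∈ 𝓝 x, ∀ m : ℝ, r < m → GInftyEstimate U m v) :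
    ∃ m : ℕ, GInftyEstimate K m v := by
  choose! r U hU hest using hloc
  obtain ⟨t, htK, hcover⟩ := hK.elim_nhds_subcover U hU
  refine ⟨t.sup fun x => ⌊r x⌋₊ + 1,
    (GInftyEstimate.biUnion fun x hx => hest x (htK x hx) _ ?_).mono hcover⟩
  calc r x < (⌊r x⌋₊ + 1 : ℕ) := by push_cast; exact Nat.lt_floor_add_one _
    _ ≤ _ := by exact_mod_cast Finset.le_sup (f := fun x => ⌊r x⌋₊ + 1) hx

theorem stmt16_general {d : ℕ} (Ω : Set (Euc d)) (hΩ : IsOpen Ω)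
    (u : ℝ → Euc d → ℝ)
    (husmooth : ∀ ε ∈ Set.Ioc (0:ℝ) 1, ContDiffOn ℝ (⊤ : ℕ∞) (u ε) Ω) :
    (∃ nf : ℝ → Euc d → ℝ,
      (∀ ε ∈ Set.Ioc (0:ℝ) 1, ContDiffOn ℝ (⊤ : ℕ∞) (nf ε) Ω) ∧
      Negligible Ω nf ∧
      -- `(u_ε − n_ε)` satisfies the `G^∞`-estimates
      (∀ K ⊆ Ω, IsCompact K → ∃ m : ℕ, ∀ l : ℕ,
        ∀ c > (0:ℝ), ∃ ε₀ > (0:ℝ), ∀ ε : ℝ, 0 < ε → ε < ε₀ →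
          ∀ α : List (Fin d), α.length ≤ l → ∀ x ∈ K,
            |mderiv α (fun y => u ε y - nf ε y) x| ≤ c * ε ^ (-(m : ℝ)))) ↔
    (∀ x ∈ Ω, ∃ r : ℝ, 0 ≤ r ∧ ∃ V : Set (Euc d), IsOpen V ∧ x ∈ V ∧ V ⊆ Ω ∧
      ∃ f : Euc d → ℝ, ContDiffOn ℝ (⊤ : ℕ∞) f V ∧
        -- `ε^r·u_ε → f` in `C^∞(V)`
        ∀ K ⊆ V, IsCompact K → ∀ α : List (Fin d), ∀ δ > (0:ℝ), ∃ ε₀ > (0:ℝ),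
          ∀ ε : ℝ, 0 < ε → ε < ε₀ → ∀ y ∈ K,
            |mderiv α (fun z => ε ^ r * u ε z) y - mderiv α f y| ≤ δ) := by
  have hsmooth : ∀ᶠ ε in 𝓝[>] (0:ℝ), ContDiffOn ℝ (⊤:ℕ∞) (u ε) Ω :=
    eventually_of_mem (Ioc_mem_nhdsGT one_pos) husmooth
  constructor
  · rintro ⟨n, hn_smooth, hn, hG⟩ x hx
    obtain ⟨ρ, hρ, hBΩ⟩ := nhds_basis_closedBall.mem_iff.1 (hΩ.mem_nhds hx)
    have hB := isCompact_closedBall x ρ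
    obtain ⟨m, hm⟩ := hG _ hBΩ hB
    have hsmooth_un := hsmooth.and (eventually_of_mem (Ioc_mem_nhdsGT one_pos) hn_smooth)
    -- `u_ε = (u_ε - n_ε) + n_ε`, and negligible families satisfy every `G^∞`-estimate
    have hu : GInftyEstimate (closedBall x ρ) m u := by
      simpa using (GInftyEstimate.iff_forall_length_le.2 hm).add hΩ hBΩ
        (hsmooth_un.mono fun ε h => ⟨h.1.sub h.2, h.2⟩) (hn.gInftyEstimate hBΩ hB m)
    refine ⟨m, m.cast_nonneg, ball x ρ, isOpen_ball, mem_ball_self hρ,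
      ball_subset_closedBall.trans hBΩ, fun _ => 0, contDiffOn_const, fun K hKV _ α δ hδ => ?_⟩
    rw [← eventually_nhdsGT_iff_exists_forall]
    simpa [mderiv_zero] using (hu.mono (hKV.trans ball_subset_closedBall)).rpow_mul_le α hδ
  · intro h
    refine ⟨fun _ _ => 0, fun _ _ => contDiffOn_const, negligible_zero Ω, fun K hKΩ hK => ?_⟩
    obtain ⟨m, hm⟩ := hK.exists_gInftyEstimate fun x hx => by
      obtain ⟨r, -, V, hV, hxV, -, f, hf, hconv⟩ := h x (hKΩ hx)
      obtain ⟨ρ, hρ, hBV⟩ := nhds_basis_closedBall.mem_iff.1 (hV.mem_nhds hxV)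
      have hB := isCompact_closedBall x ρ
      exact ⟨r, closedBall x ρ, closedBall_mem_nhds x hρ, fun m hrm =>
        gInftyEstimate_of_tendsto_rpow_mul hrm (exists_bound_mderiv hV hf hBV hB)
          fun α δ hδ => eventually_nhdsGT_iff_exists_forall.2 (hconv _ hBV hB α δ hδ)⟩
    exact ⟨m, by simpa using GInftyEstimate.iff_forall_length_le.1 hm⟩

/-- A moderate family `(u_ε)` on `Ω` differs from a `G^∞`-family by a
negligible family iff, locally around each point of `Ω`, some `ε^r·u_ε` converges in
`C^∞` to a smooth function. -/
theorem stmt16 {d : ℕ} (Ω : Set (Euc d)) (hΩ : IsOpen Ω)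
    (u : ℝ → Euc d → ℝ)
    (husmooth : ∀ ε ∈ Set.Ioc (0:ℝ) 1, ContDiffOn ℝ (⊤ : ℕ∞) (u ε) Ω)
    (humod : Moderate Ω u) :
    (∃ nf : ℝ → Euc d → ℝ,
      (∀ ε ∈ Set.Ioc (0:ℝ) 1, ContDiffOn ℝ (⊤ : ℕ∞) (nf ε) Ω) ∧
      Negligible Ω nf ∧
      -- `(u_ε − n_ε)` satisfies the `G^∞`-estimates
      (∀ K ⊆ Ω, IsCompact K → ∃ m : ℕ, ∀ l : ℕ,
        ∀ c > (0:ℝ), ∃ ε₀ > (0:ℝ), ∀ ε : ℝ, 0 < ε → ε < ε₀ →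
          ∀ α : List (Fin d), α.length ≤ l → ∀ x ∈ K,
            |mderiv α (fun y => u ε y - nf ε y) x| ≤ c * ε ^ (-(m : ℝ)))) ↔
    (∀ x ∈ Ω, ∃ r : ℝ, 0 ≤ r ∧ ∃ V : Set (Euc d), IsOpen V ∧ x ∈ V ∧ V ⊆ Ω ∧
      ∃ f : Euc d → ℝ, ContDiffOn ℝ (⊤ : ℕ∞) f V ∧
        -- `ε^r·u_ε → f` in `C^∞(V)`
        ∀ K ⊆ V, IsCompact K → ∀ α : List (Fin d), ∀ δ > (0:ℝ), ∃ ε₀ > (0:ℝ),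
          ∀ ε : ℝ, 0 < ε → ε < ε₀ → ∀ y ∈ K,
            |mderiv α (fun z => ε ^ r * u ε z) y - mderiv α f y| ≤ δ) :=
  stmt16_general Ω hΩ u husmooth

end
end

section
/- Let x₀ ∈ ℝ and let φ be a mollifier on ℝ. (a) Suppose f : ℝ → ℝ coincides on (−∞, x₀] with a smooth function f₋ ∈ C^∞(ℝ) and on [x₀, ∞) with a smooth function f₊ ∈ C^∞(ℝ), and let w_ε = f * φ_ε (convolution). Then for every n ∈ ℕ: the strength of the singularity of f at x₀ equals −n if and only if Σ_{C^1,x₀}((w_ε)) = [0, n]. (b) For k ∈ ℕ let w_ε(x) = φ_ε^{(k)}(x − x₀) (the embedding of ∂^k δ(x − x₀), whose strength at x₀ is defined to be −k−2). Then Σ_{C^1,x₀}((w_ε)) = [0, k+2]. -/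
/-!
Convergence of `ε ^ r * w_ε` in `C¹` near `x₀` amounts to continuous convergence of `ε ^ r * w_ε`
and `ε ^ r * w_ε'` as `(ε, x) → (0⁺, x)`, for every `x` near `x₀`.

For `w_ε = φ_ε ⋆ f`, the function `f` is locally Lipschitz with a.e. derivative `f'` glued from
`fm'` and `fp'`, so `w_ε' = φ_ε ⋆ f'`. Both `w_ε` and `w_ε'` stay locally bounded, hence every
`r > 0` lies in `N`; `r = 0` lies in `N` exactly when `f'` is continuous at `x₀`, since
`φ_ε ⋆ f'` converges to `f'` at its points of continuity.

For `w_ε = φ_ε^(k)(· - x₀)` one has `ε ^ r * w_ε'(x₀ + ε c) = ε ^ (r - k - 2) * φ^(k+1)(c)`.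
This tends to `0` uniformly when `r > k + 2`. When `r ≤ k + 2` it cannot converge to the same
limit for all `c`, because `φ^(k+1)` vanishes somewhere but not everywhere.
-/

open Real MeasureTheory

noncomputable section

/-- `φ` is a mollifier on `ℝ`. -/
def IsMollifier (φ : ℝ → ℝ) : Prop :=
  ContDiff ℝ (⊤ : ℕ∞) φ ∧ HasCompactSupport φ ∧ (∀ x, 0 ≤ φ x) ∧ (∫ x, φ x) = 1

/-- The scaled mollifier `φ_ε(x) = ε⁻¹ φ(x/ε)`. -/
noncomputable def scaled (φ : ℝ → ℝ) (ε : ℝ) : ℝ → ℝ :=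
  fun x => ε⁻¹ * φ (x / ε)

/-- `ε^r·w_ε → g` in `C^1(V)` as `ε → 0⁺`. -/
def ConvC1 (w : ℝ → ℝ → ℝ) (r : ℝ) (V : Set ℝ) (g : ℝ → ℝ) : Prop :=
  ∀ K ⊆ V, IsCompact K → ∀ δ > (0:ℝ), ∃ ε₀ > (0:ℝ), ∀ ε : ℝ, 0 < ε → ε < ε₀ →
    ∀ x ∈ K, |ε ^ r * w ε x - g x| ≤ δ ∧ |ε ^ r * deriv (w ε) x - deriv g x| ≤ δ

/-- `N_{C^1,x₀}((w_ε))`: exponents `r ≥ 0` such that `ε^r·w_ε` converges in `C^1` to a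
`C^1` function near `x₀`. -/
def NC1 (w : ℝ → ℝ → ℝ) (x₀ : ℝ) : Set ℝ :=
  {r : ℝ | 0 ≤ r ∧ ∃ V : Set ℝ, IsOpen V ∧ x₀ ∈ V ∧
    ∃ g : ℝ → ℝ, ContDiffOn ℝ 1 g V ∧ ConvC1 w r V g}

/-- The `C^1`-singular spectrum `Σ_{C^1,x₀}((w_ε)) = [0,∞) ∖ N_{C^1,x₀}((w_ε))`. -/
def SigmaC1 (w : ℝ → ℝ → ℝ) (x₀ : ℝ) : Set ℝ :=
  {r : ℝ | 0 ≤ r} \ NC1 w x₀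

/-- The strength of the singularity at `x₀` of a function that coincides with the
smooth function `fm` on `(-∞, x₀]` and with the smooth function `fp` on `[x₀, ∞)`
equals `s`: the order of the highest derivative continuous across `x₀`, with the
convention that the strength is `-1` when `fm x₀ ≠ fp x₀`. -/
def HasStrength (fm fp : ℝ → ℝ) (x₀ : ℝ) (s : ℤ) : Prop :=
  (s = -1 ∧ fm x₀ ≠ fp x₀) ∨
  (0 ≤ s ∧ (∀ j : ℕ, (j : ℤ) ≤ s → deriv^[j] fm x₀ = deriv^[j] fp x₀) ∧
    deriv^[s.toNat + 1] fm x₀ ≠ deriv^[s.toNat + 1] fp x₀)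

open Filter Topology Set Function ContinuousLinearMap
open scoped Convolution

section ConvergenceInC1

variable {w : ℝ → ℝ → ℝ} {r : ℝ} {V : Set ℝ} {g : ℝ → ℝ}

lemma tendstoUniformlyOn_nhdsGT_zero_iff {F : ℝ → ℝ → ℝ} {f : ℝ → ℝ} {K : Set ℝ} :
    TendstoUniformlyOn F f (𝓝[>] 0) K ↔
      ∀ δ > (0 : ℝ), ∃ ε₀ > (0 : ℝ), ∀ ε : ℝ, 0 < ε → ε < ε₀ → ∀ x ∈ K, |F ε x - f x| ≤ δ := by
  simp only [Metric.tendstoUniformlyOn_iff, (nhdsGT_basis (0 : ℝ)).eventually_iff, mem_Ioo,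
    Real.dist_eq, abs_sub_comm (f _)]
  refine ⟨fun h δ hδ => ?_, fun h δ hδ => ?_⟩
  · obtain ⟨ε₀, hε₀, h⟩ := h δ hδ
    exact ⟨ε₀, hε₀, fun ε hε hεε₀ x hx => (h ⟨hε, hεε₀⟩ x hx).le⟩
  · obtain ⟨ε₀, hε₀, h⟩ := h (δ / 2) (half_pos hδ)
    exact ⟨ε₀, hε₀, fun ε hε x hx => (h ε hε.1 hε.2 x hx).trans_lt (half_lt_self hδ)⟩

lemma convC1_iff (hV : IsOpen V) :
    ConvC1 w r V g ↔
      TendstoLocallyUniformlyOn (fun ε x => ε ^ r * w ε x) g (𝓝[>] 0) V ∧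
        TendstoLocallyUniformlyOn (fun ε x => ε ^ r * deriv (w ε) x) (deriv g) (𝓝[>] 0) V := by
  simp only [tendstoLocallyUniformlyOn_iff_forall_isCompact hV,
    tendstoUniformlyOn_nhdsGT_zero_iff, ConvC1]
  refine ⟨fun h => ⟨fun K hKV hK δ hδ => ?_, fun K hKV hK δ hδ => ?_⟩, ?_⟩
  · obtain ⟨ε₀, hε₀, h⟩ := h K hKV hK δ hδ
    exact ⟨ε₀, hε₀, fun ε hε hεε₀ x hx => (h ε hε hεε₀ x hx).1⟩
  · obtain ⟨ε₀, hε₀, h⟩ := h K hKV hK δ hδ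
    exact ⟨ε₀, hε₀, fun ε hε hεε₀ x hx => (h ε hε hεε₀ x hx).2⟩
  · rintro ⟨h₁, h₂⟩ K hKV hK δ hδ
    obtain ⟨ε₁, hε₁, h₁⟩ := h₁ K hKV hK δ hδ
    obtain ⟨ε₂, hε₂, h₂⟩ := h₂ K hKV hK δ hδ
    exact ⟨min ε₁ ε₂, lt_min hε₁ hε₂, fun ε hε hεlt x hx =>
      ⟨h₁ ε hε (hεlt.trans_le (min_le_left _ _)) x hx,
        h₂ ε hε (hεlt.trans_le (min_le_right _ _)) x hx⟩⟩

theorem tendstoLocallyUniformlyOn_of_forall_tendsto {ι α β : Type*} [TopologicalSpace α]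
    [UniformSpace β] {F : ι → α → β} {f : α → β} {p : Filter ι} {s : Set α} (hs : IsOpen s)
    (hf : ContinuousOn f s)
    (h : ∀ x ∈ s, Tendsto (fun q : ι × α => F q.1 q.2) (p ×ˢ 𝓝 x) (𝓝 (f x))) :
    TendstoLocallyUniformlyOn F f p s :=
  hs.tendstoLocallyUniformlyOn_iff_forall_tendsto.2 fun x hx =>
    (((hf.continuousAt (hs.mem_nhds hx)).tendsto.comp tendsto_snd).prodMk_nhds
      (h x hx)).mono_right (nhds_le_uniformity _)

lemma mem_NC1_of_forall_tendsto {x₀ : ℝ} (hr : 0 ≤ r) (hV : IsOpen V) (hx₀ : x₀ ∈ V)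
    (hg : ContDiffOn ℝ 1 g V)
    (hw : ∀ x ∈ V, Tendsto (fun p : ℝ × ℝ => p.1 ^ r * w p.1 p.2) (𝓝[>] 0 ×ˢ 𝓝 x) (𝓝 (g x)))
    (hw' : ∀ x ∈ V, Tendsto (fun p : ℝ × ℝ => p.1 ^ r * deriv (w p.1) p.2) (𝓝[>] 0 ×ˢ 𝓝 x)
      (𝓝 (deriv g x))) :
    r ∈ NC1 w x₀ :=
  ⟨hr, V, hV, hx₀, g, hg, (convC1_iff hV).2
    ⟨tendstoLocallyUniformlyOn_of_forall_tendsto hV hg.continuousOn hw,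
      tendstoLocallyUniformlyOn_of_forall_tendsto hV
        (hg.continuousOn_deriv_of_isOpen hV le_rfl) hw'⟩⟩

lemma ConvC1.tendsto_deriv_comp (hV : IsOpen V) (hg : ContDiffOn ℝ 1 g V)
    (h : ConvC1 w r V g) {x : ℝ} (hx : x ∈ V) {p : ℝ → ℝ} (hp : Tendsto p (𝓝[>] 0) (𝓝 x)) :
    Tendsto (fun ε => ε ^ r * deriv (w ε) (p ε)) (𝓝[>] 0) (𝓝 (deriv g x)) :=
  ((convC1_iff hV).1 h).2.tendsto_comp ((hg.continuousOn_deriv_of_isOpen hV le_rfl) x hx) hx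
    (by rwa [hV.nhdsWithin_eq hx])

lemma tendsto_rpow_mul_of_isBoundedUnder {α : Type*} {l : Filter α} {F : ℝ × α → ℝ}
    (hr : 0 < r) (hF : IsBoundedUnder (· ≤ ·) (𝓝[>] 0 ×ˢ l) fun p => |F p|) :
    Tendsto (fun p : ℝ × α => p.1 ^ r * F p) (𝓝[>] 0 ×ˢ l) (𝓝 0) := by
  refine Tendsto.zero_mul_isBoundedUnder_le ?_ hF
  have h := (Real.continuousAt_rpow_const 0 r (Or.inr hr.le)).tendsto
  rw [Real.zero_rpow hr.ne'] at h
  exact (h.mono_left nhdsWithin_le_nhds).comp tendsto_fst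

lemma sigmaC1_eq_Icc {x₀ a : ℝ} (h : ∀ r, 0 ≤ r → (r ∈ NC1 w x₀ ↔ a < r)) :
    SigmaC1 w x₀ = Icc 0 a := by
  ext r
  simp only [SigmaC1, Set.mem_sdiff, mem_Icc]
  exact and_congr_right fun hr => (not_congr (h r hr)).trans not_lt

lemma sigmaC1_eq_Icc_natCast_iff {x₀ : ℝ} (hpos : ∀ r > 0, r ∈ NC1 w x₀)
    (n : ℕ) : SigmaC1 w x₀ = Icc 0 (n : ℝ) ↔ n = 0 ∧ 0 ∉ NC1 w x₀ := by
  refine ⟨fun h => ?_, ?_⟩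
  · have hnotMem : ∀ r ∈ Icc (0 : ℝ) n, r ∉ NC1 w x₀ := fun r hr => (h ▸ hr : r ∈ SigmaC1 w x₀).2
    refine ⟨?_, hnotMem 0 ⟨le_rfl, n.cast_nonneg⟩⟩
    by_contra hn
    exact hnotMem n ⟨n.cast_nonneg, le_rfl⟩ (hpos n (by positivity))
  · rintro ⟨rfl, h0⟩
    rw [Nat.cast_zero]
    exact sigmaC1_eq_Icc fun r hr =>
      ⟨fun h => lt_of_le_of_ne hr (by rintro rfl; exact h0 h), hpos r⟩

end ConvergenceInC1

lemma integral_mul_sub_eq_convolution (f ψ : ℝ → ℝ) (x : ℝ) :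
    ∫ t, f t * ψ (x - t) = (ψ ⋆[lsmul ℝ ℝ] f) x := by
  rw [convolution_lsmul, ← integral_sub_left_eq_self _ volume x]
  simp only [sub_sub_cancel, smul_eq_mul, mul_comm]

theorem hasDerivAt_convolution_of_locallyLipschitz {ψ f f' : ℝ → ℝ} (hψ : Continuous ψ)
    (hψc : HasCompactSupport ψ) (hf : LocallyLipschitz f) (hf' : ∀ᵐ s, HasDerivAt f (f' s) s)
    (hf'm : AEStronglyMeasurable f') (x : ℝ) :
    HasDerivAt (ψ ⋆[lsmul ℝ ℝ] f) ((ψ ⋆[lsmul ℝ ℝ] f') x) x := by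
  obtain ⟨R, hR⟩ := hψc.isCompact.isBounded.subset_closedBall 0
  obtain ⟨K, hK⟩ := hf.locallyLipschitzOn.exists_lipschitzOnWith_of_compact
    (isCompact_closedBall x (1 + R))
  have hreflect := (Measure.measurePreserving_sub_left volume x).quasiMeasurePreserving
  have hshift : Continuous fun p : ℝ × ℝ => ψ p.2 * f (p.1 - p.2) :=
    (hψ.comp continuous_snd).mul (hf.continuous.comp (continuous_fst.sub continuous_snd))
  have hlip : ∀ t, LipschitzOnWith (Real.nnabs (K * |ψ t|)) (fun y => ψ t • f (y - t))
      (Metric.ball x 1) := by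
    intro t
    refine LipschitzOnWith.of_dist_le_mul fun y₁ hy₁ y₂ hy₂ => ?_
    by_cases ht : ψ t = 0
    · simp [ht]
    have htR : ‖t‖ ≤ R := mem_closedBall_zero_iff.1 (hR (subset_tsupport ψ ht))
    have hmem : ∀ y ∈ Metric.ball x 1, y - t ∈ Metric.closedBall x (1 + R) := fun y hy => by
      rw [Metric.mem_ball, Real.dist_eq] at hy
      rw [Real.norm_eq_abs] at htR
      rw [Metric.mem_closedBall, Real.dist_eq, sub_right_comm]
      linarith [abs_sub (y - x) t]
    rw [Real.coe_nnabs, abs_of_nonneg (by positivity), dist_smul₀, Real.norm_eq_abs]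
    calc |ψ t| * dist (f (y₁ - t)) (f (y₂ - t))
        ≤ |ψ t| * (K * dist (y₁ - t) (y₂ - t)) := by
          gcongr; exact hK.dist_le_mul _ (hmem _ hy₁) _ (hmem _ hy₂)
      _ = K * |ψ t| * dist y₁ y₂ := by rw [dist_sub_right]; ring
  refine (hasDerivAt_integral_of_dominated_loc_of_lip (Metric.ball_mem_nhds x one_pos)
    (Eventually.of_forall fun y => ?_) ?_ ?_ (Eventually.of_forall hlip)
    ((hψ.integrable_of_hasCompactSupport hψc).abs.const_mul K) ?_).2
  · exact (hshift.comp (Continuous.prodMk_right y)).aestronglyMeasurable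
  · exact (hshift.comp (Continuous.prodMk_right x)).integrable_of_hasCompactSupport hψc.mul_right
  · exact hψ.aestronglyMeasurable.smul (hf'm.comp_quasiMeasurePreserving hreflect)
  · filter_upwards [hreflect.ae hf'] with t ht
    exact (ht.comp_sub_const x t).const_smul (ψ t)


namespace IsMollifier

variable {φ : ℝ → ℝ}

lemma exists_support_subset_ball (hφ : IsMollifier φ) : ∃ R > 0, support φ ⊆ Metric.ball 0 R :=
  (hφ.2.1.isCompact.isBounded.subset_ball_lt 0 0).imp fun _ ⟨hR, h⟩ =>
    ⟨hR, (subset_tsupport φ).trans h⟩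

lemma scaled_nonneg (hφ : IsMollifier φ) {ε : ℝ} (hε : 0 < ε) (x : ℝ) : 0 ≤ scaled φ ε x :=
  mul_nonneg (inv_nonneg.2 hε.le) (hφ.2.2.1 _)

lemma integral_scaled (hφ : IsMollifier φ) {ε : ℝ} (hε : 0 < ε) : ∫ x, scaled φ ε x = 1 := by
  simp only [scaled, integral_const_mul, Measure.integral_comp_div, hφ.2.2.2, abs_of_pos hε,
    smul_eq_mul, mul_one, inv_mul_cancel₀ hε.ne']

lemma continuous_scaled (hφ : IsMollifier φ) (ε : ℝ) : Continuous (scaled φ ε) :=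
  continuous_const.mul (hφ.1.continuous.comp (continuous_id.div_const ε))

lemma hasCompactSupport_scaled (hφ : IsMollifier φ) {ε : ℝ} (hε : ε ≠ 0) :
    HasCompactSupport (scaled φ ε) := by
  have := (hφ.2.1.comp_smul (inv_ne_zero hε)).mul_left (f := fun _ : ℝ => ε⁻¹)
  simp only [smul_eq_mul, inv_mul_eq_div] at this
  exact this

lemma eventually_support_scaled_subset (hφ : IsMollifier φ) {ρ : ℝ} (hρ : 0 < ρ) :
    ∀ᶠ ε in 𝓝[>] 0, support (scaled φ ε) ⊆ Metric.ball 0 ρ := by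
  obtain ⟨R, hR, hsupp⟩ := hφ.exists_support_subset_ball
  have hmem : Ioo (0 : ℝ) (ρ / R) ∈ 𝓝[>] 0 := Ioo_mem_nhdsGT (div_pos hρ hR)
  filter_upwards [hmem] with ε ⟨hε, hερ⟩ y hy
  have hyε : |y| / |ε| < R := by
    simpa using hsupp (mem_support.2 (right_ne_zero_of_mul (mem_support.1 hy)))
  rw [abs_of_pos hε, div_lt_iff₀ hε] at hyε
  rw [mem_ball_zero_iff, Real.norm_eq_abs]
  calc |y| < R * ε := hyε
    _ ≤ R * (ρ / R) := by gcongr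
    _ = ρ := mul_div_cancel₀ ρ hR.ne'

lemma tendsto_convolution_scaled (hφ : IsMollifier φ) {h : ℝ → ℝ} {x : ℝ}
    (hm : AEStronglyMeasurable h) (hc : ContinuousAt h x) :
    Tendsto (fun p : ℝ × ℝ => (scaled φ p.1 ⋆[lsmul ℝ ℝ] h) p.2) (𝓝[>] 0 ×ˢ 𝓝 x) (𝓝 (h x)) := by
  have hpos : ∀ᶠ p : ℝ × ℝ in 𝓝[>] 0 ×ˢ 𝓝 x, 0 < p.1 :=
    tendsto_fst.eventually self_mem_nhdsWithin
  refine convolution_tendsto_right (φ := fun p : ℝ × ℝ => scaled φ p.1) (g := fun _ => h)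
    (hpos.mono fun p hp => hφ.scaled_nonneg hp) (hpos.mono fun p hp => hφ.integral_scaled hp)
    ?_ (Eventually.of_forall fun _ => hm) (hc.tendsto.comp tendsto_snd) tendsto_snd
  rw [tendsto_smallSets_iff]
  intro t ht
  obtain ⟨ρ, hρ, hρt⟩ := Metric.mem_nhds_iff.1 ht
  exact (tendsto_fst.eventually (hφ.eventually_support_scaled_subset hρ)).mono
    fun p hp => hp.trans hρt

lemma eventually_abs_convolution_scaled_le (hφ : IsMollifier φ) {h : ℝ → ℝ} {x C : ℝ}
    (hm : AEStronglyMeasurable h) (hb : ∀ᶠ y in 𝓝 x, |h y| ≤ C) :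
    ∀ᶠ p : ℝ × ℝ in 𝓝[>] 0 ×ˢ 𝓝 x, |(scaled φ p.1 ⋆[lsmul ℝ ℝ] h) p.2| ≤ C := by
  obtain ⟨ρ, hρ, hbρ⟩ := Metric.eventually_nhds_iff_ball.1 hb
  have hsupp := hφ.eventually_support_scaled_subset (half_pos hρ)
  filter_upwards [(tendsto_fst.eventually (hsupp.and self_mem_nhdsWithin)),
    tendsto_snd.eventually (Metric.ball_mem_nhds x (half_pos hρ))] with p ⟨hp, hp₀⟩ hpx
  have := dist_convolution_le (z₀ := (0 : ℝ))
    ((abs_nonneg _).trans (hbρ x (Metric.mem_ball_self hρ))) hp (hφ.scaled_nonneg hp₀)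
    (hφ.integral_scaled hp₀) hm fun y hy => by
      rw [Real.dist_eq, sub_zero]
      refine hbρ y ?_
      calc dist y x ≤ dist y p.2 + dist p.2 x := dist_triangle _ _ _
        _ < ρ / 2 + ρ / 2 := add_lt_add hy hpx
        _ = ρ := add_halves ρ
  rwa [Real.dist_eq, sub_zero] at this

lemma tendsto_rpow_mul_convolution_scaled (hφ : IsMollifier φ) {h : ℝ → ℝ} {x r : ℝ}
    (hr : 0 < r) (hm : AEStronglyMeasurable h)
    (hb : IsBoundedUnder (· ≤ ·) (𝓝 x) fun y => |h y|) :
    Tendsto (fun p : ℝ × ℝ => p.1 ^ r * (scaled φ p.1 ⋆[lsmul ℝ ℝ] h) p.2) (𝓝[>] 0 ×ˢ 𝓝 x)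
      (𝓝 0) :=
  let ⟨_, hC⟩ := hb
  tendsto_rpow_mul_of_isBoundedUnder hr
    (isBoundedUnder_of_eventually_le (hφ.eventually_abs_convolution_scaled_le hm hC))

end IsMollifier

def piecewiseDeriv (x₀ : ℝ) (fm fp : ℝ → ℝ) : ℝ → ℝ :=
  fun x => if x ≤ x₀ then deriv fm x else deriv fp x

section Piecewise

variable {x₀ : ℝ} {f fm fp : ℝ → ℝ}

lemma locallyLipschitz_of_piecewise (hfm : ContDiff ℝ 1 fm) (hfp : ContDiff ℝ 1 fp)
    (hfml : ∀ x ≤ x₀, f x = fm x) (hfpr : ∀ x, x₀ ≤ x → f x = fp x) : LocallyLipschitz f := by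
  have hf : f = fun x => fm x + (fp - fm) (max x x₀) := by
    funext x
    rcases le_total x x₀ with hx | hx
    · rw [max_eq_right hx, Pi.sub_apply, ← hfml x₀ le_rfl, ← hfpr x₀ le_rfl, sub_self, add_zero,
        hfml x hx]
    · rw [max_eq_left hx, Pi.sub_apply, add_sub_cancel, hfpr x hx]
  rw [hf]
  exact hfm.locallyLipschitz.add
    ((hfp.sub hfm).locallyLipschitz.comp (LipschitzWith.id.max_const x₀).locallyLipschitz)

lemma hasDerivAt_of_piecewise_of_ne (hfm : Differentiable ℝ fm) (hfp : Differentiable ℝ fp)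
    (hfml : ∀ x ≤ x₀, f x = fm x) (hfpr : ∀ x, x₀ ≤ x → f x = fp x) {x : ℝ} (hx : x ≠ x₀) :
    HasDerivAt f (piecewiseDeriv x₀ fm fp x) x := by
  rcases hx.lt_or_gt with hx | hx
  · rw [piecewiseDeriv, if_pos hx.le]
    exact (hfm x).hasDerivAt.congr_of_eventuallyEq
      (eventually_of_mem (Iio_mem_nhds hx) fun y hy => hfml y (le_of_lt hy))
  · rw [piecewiseDeriv, if_neg (not_le.2 hx)]
    exact (hfp x).hasDerivAt.congr_of_eventuallyEq
      (eventually_of_mem (Ioi_mem_nhds hx) fun y hy => hfpr y (le_of_lt hy))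

lemma hasDerivAt_of_piecewise_of_deriv_eq (hfm : Differentiable ℝ fm) (hfp : Differentiable ℝ fp)
    (hfml : ∀ x ≤ x₀, f x = fm x) (hfpr : ∀ x, x₀ ≤ x → f x = fp x)
    (hde : deriv fm x₀ = deriv fp x₀) (x : ℝ) : HasDerivAt f (piecewiseDeriv x₀ fm fp x) x := by
  rcases eq_or_ne x x₀ with rfl | hx
  · rw [piecewiseDeriv, if_pos le_rfl]
    have hleft := ((hfm x).hasDerivAt.hasDerivWithinAt (s := Iic x)).congr hfml (hfml x le_rfl)
    have hright := ((hfp x).hasDerivAt.hasDerivWithinAt (s := Ici x)).congr hfpr (hfpr x le_rfl)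
    rw [← hde] at hright
    have := hleft.union hright
    rwa [Iic_union_Ici, hasDerivWithinAt_univ] at this
  · exact hasDerivAt_of_piecewise_of_ne hfm hfp hfml hfpr hx

lemma measurable_piecewiseDeriv : Measurable (piecewiseDeriv x₀ fm fp) :=
  Measurable.ite measurableSet_Iic (measurable_deriv fm) (measurable_deriv fp)

lemma continuousAt_piecewiseDeriv (hfm : ContDiff ℝ 1 fm) (hfp : ContDiff ℝ 1 fp) {x : ℝ}
    (hx : x ≠ x₀) : ContinuousAt (piecewiseDeriv x₀ fm fp) x := by
  rcases hx.lt_or_gt with hx | hx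
  · refine ((hfm.continuous_deriv le_rfl).continuousAt).congr
      (eventually_of_mem (Iio_mem_nhds hx) fun y hy => ?_)
    rw [piecewiseDeriv, if_pos (le_of_lt hy)]
  · refine ((hfp.continuous_deriv le_rfl).continuousAt).congr
      (eventually_of_mem (Ioi_mem_nhds hx) fun y hy => ?_)
    rw [piecewiseDeriv, if_neg (not_le.2 hy)]

lemma continuous_piecewiseDeriv (hfm : ContDiff ℝ 1 fm) (hfp : ContDiff ℝ 1 fp)
    (hde : deriv fm x₀ = deriv fp x₀) : Continuous (piecewiseDeriv x₀ fm fp) :=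
  Continuous.if_le (hfm.continuous_deriv le_rfl) (hfp.continuous_deriv le_rfl) continuous_id
    continuous_const fun x hx => by rw [hx, hde]

lemma isBoundedUnder_abs_piecewiseDeriv (hfm : ContDiff ℝ 1 fm) (hfp : ContDiff ℝ 1 fp)
    (x : ℝ) : IsBoundedUnder (· ≤ ·) (𝓝 x) fun y => |piecewiseDeriv x₀ fm fp y| := by
  have hcont : Continuous fun y => |deriv fm y| + |deriv fp y| :=
    (hfm.continuous_deriv le_rfl).abs.add (hfp.continuous_deriv le_rfl).abs
  refine hcont.continuousAt.tendsto.isBoundedUnder_le.mono_le (Eventually.of_forall fun y => ?_)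
  dsimp only [piecewiseDeriv]
  split_ifs
  · exact le_add_of_nonneg_right (abs_nonneg _)
  · exact le_add_of_nonneg_left (abs_nonneg _)

lemma tendsto_piecewiseDeriv_nhdsLT (hfm : ContDiff ℝ 1 fm) :
    Tendsto (piecewiseDeriv x₀ fm fp) (𝓝[<] x₀) (𝓝 (deriv fm x₀)) :=
  ((hfm.continuous_deriv le_rfl).continuousAt.mono_left nhdsWithin_le_nhds).congr'
    (eventually_nhdsWithin_of_forall fun y hy => by rw [piecewiseDeriv, if_pos (le_of_lt hy)])

lemma tendsto_piecewiseDeriv_nhdsGT (hfp : ContDiff ℝ 1 fp) :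
    Tendsto (piecewiseDeriv x₀ fm fp) (𝓝[>] x₀) (𝓝 (deriv fp x₀)) :=
  ((hfp.continuous_deriv le_rfl).continuousAt.mono_left nhdsWithin_le_nhds).congr'
    (eventually_nhdsWithin_of_forall fun y hy => by rw [piecewiseDeriv, if_neg (not_le.2 hy)])

end Piecewise

section ConvolutionOfPiecewise

variable {φ : ℝ → ℝ} {x₀ : ℝ} {f fm fp : ℝ → ℝ}

lemma deriv_convolution_scaled_piecewise (hφ : IsMollifier φ)
    (hfm : ContDiff ℝ 1 fm) (hfp : ContDiff ℝ 1 fp)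
    (hfml : ∀ x ≤ x₀, f x = fm x) (hfpr : ∀ x, x₀ ≤ x → f x = fp x) {ε : ℝ} (hε : 0 < ε) :
    deriv (scaled φ ε ⋆[lsmul ℝ ℝ] f) = scaled φ ε ⋆[lsmul ℝ ℝ] piecewiseDeriv x₀ fm fp :=
  funext fun x => (hasDerivAt_convolution_of_locallyLipschitz (hφ.continuous_scaled ε)
    (hφ.hasCompactSupport_scaled hε.ne') (locallyLipschitz_of_piecewise hfm hfp hfml hfpr)
    ((volume.ae_ne x₀).mono fun _ hs =>
      hasDerivAt_of_piecewise_of_ne (hfm.differentiable one_ne_zero)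
        (hfp.differentiable one_ne_zero) hfml hfpr hs)
    measurable_piecewiseDeriv.aestronglyMeasurable x).deriv

lemma mem_NC1_convolution_piecewise_of_pos (hφ : IsMollifier φ)
    (hfm : ContDiff ℝ 1 fm) (hfp : ContDiff ℝ 1 fp)
    (hfml : ∀ x ≤ x₀, f x = fm x) (hfpr : ∀ x, x₀ ≤ x → f x = fp x) {r : ℝ} (hr : 0 < r) :
    r ∈ NC1 (fun ε => scaled φ ε ⋆[lsmul ℝ ℝ] f) x₀ := by
  have hf := (locallyLipschitz_of_piecewise hfm hfp hfml hfpr).continuous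
  refine mem_NC1_of_forall_tendsto hr.le isOpen_univ (mem_univ x₀) (contDiffOn_const (c := 0))
    (fun x _ => hφ.tendsto_rpow_mul_convolution_scaled hr hf.aestronglyMeasurable
      hf.continuousAt.abs.tendsto.isBoundedUnder_le) fun x _ => ?_
  rw [deriv_const]
  refine (hφ.tendsto_rpow_mul_convolution_scaled hr
    (measurable_piecewiseDeriv (x₀ := x₀)).aestronglyMeasurable
    (isBoundedUnder_abs_piecewiseDeriv hfm hfp x)).congr' ?_
  filter_upwards [tendsto_fst.eventually self_mem_nhdsWithin] with p (hp : 0 < p.1)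
  rw [deriv_convolution_scaled_piecewise hφ hfm hfp hfml hfpr hp]

lemma zero_mem_NC1_convolution_piecewise (hφ : IsMollifier φ)
    (hfm : ContDiff ℝ 1 fm) (hfp : ContDiff ℝ 1 fp)
    (hfml : ∀ x ≤ x₀, f x = fm x) (hfpr : ∀ x, x₀ ≤ x → f x = fp x)
    (hde : deriv fm x₀ = deriv fp x₀) :
    0 ∈ NC1 (fun ε => scaled φ ε ⋆[lsmul ℝ ℝ] f) x₀ := by
  have hderiv := hasDerivAt_of_piecewise_of_deriv_eq (hfm.differentiable one_ne_zero)
    (hfp.differentiable one_ne_zero) hfml hfpr hde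
  have hf' : deriv f = piecewiseDeriv x₀ fm fp := funext fun x => (hderiv x).deriv
  have hcont := continuous_piecewiseDeriv hfm hfp hde
  have hf : ContDiff ℝ 1 f := contDiff_one_iff_deriv.2
    ⟨fun x => (hderiv x).differentiableAt, hf' ▸ hcont⟩
  refine mem_NC1_of_forall_tendsto le_rfl isOpen_univ (mem_univ x₀) hf.contDiffOn
    (fun x _ => ?_) fun x _ => ?_
  · simpa only [Real.rpow_zero, one_mul] using
      hφ.tendsto_convolution_scaled hf.continuous.aestronglyMeasurable hf.continuous.continuousAt
  · rw [hf']
    refine (hφ.tendsto_convolution_scaled measurable_piecewiseDeriv.aestronglyMeasurable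
      hcont.continuousAt).congr' ?_
    filter_upwards [tendsto_fst.eventually self_mem_nhdsWithin] with p (hp : 0 < p.1)
    rw [Real.rpow_zero, one_mul, deriv_convolution_scaled_piecewise hφ hfm hfp hfml hfpr hp]

lemma zero_notMem_NC1_convolution_piecewise (hφ : IsMollifier φ)
    (hfm : ContDiff ℝ 1 fm) (hfp : ContDiff ℝ 1 fp)
    (hfml : ∀ x ≤ x₀, f x = fm x) (hfpr : ∀ x, x₀ ≤ x → f x = fp x)
    (hde : deriv fm x₀ ≠ deriv fp x₀) :
    0 ∉ NC1 (fun ε => scaled φ ε ⋆[lsmul ℝ ℝ] f) x₀ := by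
  rintro ⟨-, V, hV, hx₀, g, hg, hconv⟩
  have hg' : deriv g =ᶠ[𝓝[≠] x₀] piecewiseDeriv x₀ fm fp := by
    filter_upwards [mem_nhdsWithin_of_mem_nhds (hV.mem_nhds hx₀), self_mem_nhdsWithin]
      with x hxV (hx : x ≠ x₀)
    refine tendsto_nhds_unique (hconv.tendsto_deriv_comp hV hg hxV tendsto_const_nhds) ?_
    refine ((hφ.tendsto_convolution_scaled measurable_piecewiseDeriv.aestronglyMeasurable
      (continuousAt_piecewiseDeriv hfm hfp hx)).comp
        (tendsto_id.prodMk tendsto_const_nhds)).congr' ?_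
    filter_upwards [self_mem_nhdsWithin] with ε (hε : 0 < ε)
    rw [Function.comp_apply, Real.rpow_zero, one_mul,
      deriv_convolution_scaled_piecewise hφ hfm hfp hfml hfpr hε]
    rfl
  have hlim : Tendsto (piecewiseDeriv x₀ fm fp) (𝓝[≠] x₀) (𝓝 (deriv g x₀)) :=
    (((hg.continuousOn_deriv_of_isOpen hV le_rfl).continuousAt (hV.mem_nhds hx₀)).mono_left
      nhdsWithin_le_nhds).congr' hg'
  have hleft := tendsto_nhds_unique (tendsto_piecewiseDeriv_nhdsLT hfm)
    (hlim.mono_left (nhdsWithin_mono _ fun y hy => ne_of_lt hy))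
  have hright := tendsto_nhds_unique (tendsto_piecewiseDeriv_nhdsGT hfp)
    (hlim.mono_left (nhdsWithin_mono _ fun y hy => ne_of_gt hy))
  exact hde (hleft.trans hright.symm)

end ConvolutionOfPiecewise

lemma HasCompactSupport.iterate_deriv {ψ : ℝ → ℝ} (hψ : HasCompactSupport ψ) (m : ℕ) :
    HasCompactSupport (deriv^[m] ψ) := by
  induction m with
  | zero => exact hψ
  | succ m ih => rw [Function.iterate_succ_apply']; exact ih.deriv

lemma HasCompactSupport.exists_eq_zero {ψ : ℝ → ℝ} (hψ : HasCompactSupport ψ) : ∃ x, ψ x = 0 :=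
  let ⟨x, hx⟩ := ne_univ_iff_exists_notMem _ |>.1 hψ.isCompact.ne_univ
  ⟨x, image_eq_zero_of_notMem_tsupport hx⟩

lemma HasCompactSupport.eq_zero_of_deriv_eq_zero {ψ : ℝ → ℝ} (hψ : HasCompactSupport ψ)
    (hd : Differentiable ℝ ψ) (h : deriv ψ = 0) : ψ = 0 := by
  obtain ⟨c, hc⟩ := hψ.exists_eq_zero
  exact funext fun x => (is_const_of_deriv_eq_zero hd (congrFun h) x c).trans hc

lemma iterate_deriv_ne_zero {ψ : ℝ → ℝ} (hψ : ContDiff ℝ (⊤ : ℕ∞) ψ) (hc : HasCompactSupport ψ)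
    (h0 : ψ ≠ 0) (m : ℕ) : deriv^[m] ψ ≠ 0 := by
  induction m with
  | zero => exact h0
  | succ m ih =>
    rw [Function.iterate_succ_apply']
    exact fun h => ih ((hc.iterate_deriv m).eq_zero_of_deriv_eq_zero
      ((hψ.iterate_deriv m).differentiable (by simp)) h)

lemma iterate_deriv_scaled {φ : ℝ → ℝ} (hφ : ContDiff ℝ (⊤ : ℕ∞) φ) (ε : ℝ) (m : ℕ) :
    deriv^[m] (scaled φ ε) = fun y => ε⁻¹ ^ (m + 1) * deriv^[m] φ (y / ε) := by
  induction m with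
  | zero => funext y; simp [scaled]
  | succ m ih =>
    funext y
    have hdiv : HasDerivAt (fun y : ℝ => y / ε) ε⁻¹ y := by
      simpa using (hasDerivAt_id y).div_const ε
    have hd : HasDerivAt (fun y => deriv^[m] φ (y / ε)) (deriv (deriv^[m] φ) (y / ε) * ε⁻¹) y :=
      (((hφ.iterate_deriv m).differentiable (by simp)) (y / ε)).hasDerivAt.comp y hdiv
    rw [Function.iterate_succ_apply', ih, (hd.const_mul (ε⁻¹ ^ (m + 1))).deriv,
      Function.iterate_succ_apply']
    ring

lemma rpow_mul_inv_pow_mul {ε : ℝ} (hε : 0 < ε) (r : ℝ) (m : ℕ) (a : ℝ) :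
    ε ^ r * (ε⁻¹ ^ m * a) = ε ^ (r - m) * a := by
  rw [← mul_assoc, inv_pow, ← Real.rpow_natCast ε m, ← Real.rpow_neg hε.le,
    ← Real.rpow_add hε, sub_eq_add_neg]

namespace IsMollifier

variable {φ : ℝ → ℝ}

lemma exists_iterate_deriv_ne_zero (hφ : IsMollifier φ) (m : ℕ) : ∃ c, deriv^[m] φ c ≠ 0 :=
  Function.ne_iff.1 <| iterate_deriv_ne_zero hφ.1 hφ.2.1
    (fun h => by simpa [h] using hφ.2.2.2) m

lemma tendsto_rpow_mul_iterate_deriv_scaled (hφ : IsMollifier φ) {m : ℕ} {r : ℝ}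
    (hr : (m : ℝ) + 1 < r) (x₀ x : ℝ) :
    Tendsto (fun p : ℝ × ℝ => p.1 ^ r * deriv^[m] (scaled φ p.1) (p.2 - x₀))
      (𝓝[>] 0 ×ˢ 𝓝 x) (𝓝 0) := by
  obtain ⟨C, hC⟩ := (hφ.1.iterate_deriv m).continuous.bounded_above_of_compact_support
    (hφ.2.1.iterate_deriv m)
  refine (tendsto_rpow_mul_of_isBoundedUnder (r := r - (m + 1)) (by linarith)
    (isBoundedUnder_of_eventually_le (Eventually.of_forall fun p =>
      hC ((p.2 - x₀) / p.1)))).congr' ?_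
  filter_upwards [tendsto_fst.eventually self_mem_nhdsWithin] with p (hp : 0 < p.1)
  rw [iterate_deriv_scaled hφ.1, rpow_mul_inv_pow_mul hp]
  push_cast
  rfl

end IsMollifier

section DerivativeOfDelta

variable {φ : ℝ → ℝ} {x₀ : ℝ} {k : ℕ} {r : ℝ}

lemma deriv_iterate_deriv_scaled_comp_sub (hφ : ContDiff ℝ (⊤ : ℕ∞) φ) (ε x : ℝ) :
    deriv (fun x => deriv^[k] (scaled φ ε) (x - x₀)) x =
      ε⁻¹ ^ (k + 2) * deriv^[k + 1] φ ((x - x₀) / ε) := by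
  rw [deriv_comp_sub_const, ← Function.iterate_succ_apply' deriv, iterate_deriv_scaled hφ]

lemma mem_NC1_iterate_deriv_scaled (hφ : IsMollifier φ) (hr : (k : ℝ) + 2 < r) :
    r ∈ NC1 (fun ε x => deriv^[k] (scaled φ ε) (x - x₀)) x₀ := by
  refine mem_NC1_of_forall_tendsto ((by positivity : (0 : ℝ) ≤ k + 2).trans hr.le) isOpen_univ
    (mem_univ x₀) (contDiffOn_const (c := 0))
    (fun x _ => hφ.tendsto_rpow_mul_iterate_deriv_scaled (by linarith) x₀ x) fun x _ => ?_
  rw [deriv_const]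
  refine (hφ.tendsto_rpow_mul_iterate_deriv_scaled (m := k + 1) (by push_cast; linarith) x₀ x).congr
    fun p => ?_
  rw [deriv_comp_sub_const, Function.iterate_succ_apply']

lemma notMem_NC1_iterate_deriv_scaled (hφ : IsMollifier φ) (hr : r ≤ (k : ℝ) + 2) :
    r ∉ NC1 (fun ε x => deriv^[k] (scaled φ ε) (x - x₀)) x₀ := by
  rintro ⟨-, V, hV, hx₀, g, hg, hconv⟩
  have hlim : ∀ c, Tendsto (fun ε : ℝ => ε ^ (r - (k + 2 : ℕ)) * deriv^[k + 1] φ c) (𝓝[>] 0)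
      (𝓝 (deriv g x₀)) := by
    intro c
    have hp : Tendsto (fun ε : ℝ => x₀ + ε * c) (𝓝[>] 0) (𝓝 x₀) :=
      ((continuous_const.add (continuous_id.mul continuous_const)).tendsto' 0 x₀
        (by simp)).mono_left nhdsWithin_le_nhds
    refine (hconv.tendsto_deriv_comp hV hg hx₀ hp).congr' ?_
    filter_upwards [self_mem_nhdsWithin] with ε (hε : 0 < ε)
    rw [deriv_iterate_deriv_scaled_comp_sub hφ.1, rpow_mul_inv_pow_mul hε, add_sub_cancel_left,
      mul_div_cancel_left₀ c hε.ne']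
  obtain ⟨c₀, hc₀⟩ := (hφ.2.1.iterate_deriv (k + 1)).exists_eq_zero
  have hg₀ : deriv g x₀ = 0 := tendsto_nhds_unique (hlim c₀) (by simp [hc₀])
  obtain ⟨c, hc⟩ := hφ.exists_iterate_deriv_ne_zero (k + 1)
  have hbig : ∀ᶠ ε : ℝ in 𝓝[>] 0, |deriv^[k + 1] φ c| ≤
      |ε ^ (r - (k + 2 : ℕ)) * deriv^[k + 1] φ c| := by
    filter_upwards [Ioo_mem_nhdsGT one_pos] with ε ⟨hε, hε1⟩
    rw [abs_mul, abs_of_pos (Real.rpow_pos_of_pos hε _)]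
    refine le_mul_of_one_le_left (abs_nonneg _)
      (Real.one_le_rpow_of_pos_of_le_one_of_nonpos hε hε1.le ?_)
    push_cast
    linarith
  have := ge_of_tendsto (hlim c).abs hbig
  rw [hg₀, abs_zero] at this
  exact hc (abs_nonpos_iff.1 this)

end DerivativeOfDelta

lemma hasStrength_neg_natCast_iff {fm fp : ℝ → ℝ} {x₀ : ℝ} (hval : fm x₀ = fp x₀) (n : ℕ) :
    HasStrength fm fp x₀ (-n) ↔ n = 0 ∧ deriv fm x₀ ≠ deriv fp x₀ := by
  refine ⟨?_, ?_⟩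
  · rintro (⟨-, h⟩ | ⟨hn, -, h⟩)
    · exact absurd hval h
    · obtain rfl : n = 0 := by omega
      exact ⟨rfl, by simpa using h⟩
  · rintro ⟨rfl, h⟩
    refine Or.inr ⟨by simp, fun j hj => ?_, by simpa using h⟩
    obtain rfl : j = 0 := by omega
    exact hval

/-- (a) For `f` piecewise smooth across `x₀`, the strength of the
singularity of `f` at `x₀` equals `−n` iff the `C^1`-singular spectrum of the family of
regularizations `f * φ_ε` is `[0,n]`. (b) The embedding of `∂^k δ(x−x₀)` (of strength
`−k−2`) has `C^1`-singular spectrum `[0, k+2]`. -/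
theorem stmt18 (x₀ : ℝ) (φ : ℝ → ℝ) (hφ : IsMollifier φ) :
    (∀ f fm fp : ℝ → ℝ, ContDiff ℝ (⊤ : ℕ∞) fm → ContDiff ℝ (⊤ : ℕ∞) fp →
      (∀ x ≤ x₀, f x = fm x) → (∀ x, x₀ ≤ x → f x = fp x) →
      ∀ n : ℕ,
        (HasStrength fm fp x₀ (-(n : ℤ)) ↔
          SigmaC1 (fun ε x => ∫ t : ℝ, f t * scaled φ ε (x - t)) x₀
            = Set.Icc 0 (n : ℝ))) ∧
    (∀ k : ℕ,
      SigmaC1 (fun ε x => deriv^[k] (scaled φ ε) (x - x₀)) x₀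
        = Set.Icc 0 ((k : ℝ) + 2)) := by
  refine ⟨fun f fm fp hfm hfp hfml hfpr n => ?_, fun k => ?_⟩
  · have hfm1 : ContDiff ℝ 1 fm := hfm.of_le (by exact_mod_cast le_top)
    have hfp1 : ContDiff ℝ 1 fp := hfp.of_le (by exact_mod_cast le_top)
    have hw : (fun ε x => ∫ t : ℝ, f t * scaled φ ε (x - t)) =
        fun ε => scaled φ ε ⋆[lsmul ℝ ℝ] f :=
      funext fun ε => funext (integral_mul_sub_eq_convolution f (scaled φ ε))
    rw [hw, hasStrength_neg_natCast_iff ((hfml x₀ le_rfl).symm.trans (hfpr x₀ le_rfl)),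
      sigmaC1_eq_Icc_natCast_iff fun r hr =>
        mem_NC1_convolution_piecewise_of_pos hφ hfm1 hfp1 hfml hfpr hr]
    exact and_congr_right fun _ =>
      ⟨zero_notMem_NC1_convolution_piecewise hφ hfm1 hfp1 hfml hfpr,
        fun h hde => h (zero_mem_NC1_convolution_piecewise hφ hfm1 hfp1 hfml hfpr hde)⟩
  · exact sigmaC1_eq_Icc fun r _ =>
      ⟨fun h => not_le.1 fun hle => notMem_NC1_iterate_deriv_scaled hφ hle h,
        mem_NC1_iterate_deriv_scaled hφ⟩

end
end

section
/- Let m, n ≥ 1 be integers and φ a mollifier on ℝ. For ε ∈ (0,1] define u_ε(x,t) = (φ_ε(x + 1 − t))^m, v_ε(x,t) = (φ_ε(x − 1 + t))^n, and w_ε(x,t) = ∫_0^t u_ε(x,s) v_ε(x,s) ds for (x,t) ∈ ℝ × [0,∞) (so that (u_ε, v_ε, w_ε) solves (∂_t + ∂_x)u = 0, u(·,0) = φ_ε^m(·+1); (∂_t − ∂_x)v = 0, v(·,0) = φ_ε^n(·−1); ∂_t w = u·v, w(·,0) = 0). Then: (i) every point (x,t) with x ≠ 0 and t ≥ 0, as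 well as every point (0,t) with 0 ≤ t < 1, has an open neighbourhood V in ℝ × [0,∞) and an ε₀ > 0 such that w_ε vanishes identically on V for all ε < ε₀; (ii) for every t ≥ 1, Σ_{C^1,(0,t)}((w_ε)) ⊆ [0, m+n]: for every real r > m+n there exist an open neighbourhood V of (0,t) in ℝ × [0,∞) and g ∈ C^1(V) such that ε^r w_ε → g in C^1(V) as ε → 0. -/
open Real MeasureTheory

noncomputable section

/-- The first component of the solution: `u_ε(x,t) = (φ_ε(x+1−t))^m`. -/
noncomputable def uSol (φ : ℝ → ℝ) (m : ℕ) (ε : ℝ) : ℝ × ℝ → ℝ :=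
  fun p => (scaled φ ε (p.1 + 1 - p.2)) ^ m

/-- The second component of the solution: `v_ε(x,t) = (φ_ε(x−1+t))^n`. -/
noncomputable def vSol (φ : ℝ → ℝ) (n : ℕ) (ε : ℝ) : ℝ × ℝ → ℝ :=
  fun p => (scaled φ ε (p.1 - 1 + p.2)) ^ n

/-- The third component: `w_ε(x,t) = ∫_0^t u_ε(x,s)·v_ε(x,s) ds`. -/
noncomputable def wSol (φ : ℝ → ℝ) (m n : ℕ) (ε : ℝ) : ℝ × ℝ → ℝ :=
  fun p => ∫ s in (0:ℝ)..p.2, uSol φ m ε (p.1, s) * vSol φ n ε (p.1, s)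

/-- The closed half-plane `ℝ × [0,∞)`. -/
def HalfPlane : Set (ℝ × ℝ) := {p : ℝ × ℝ | 0 ≤ p.2}

/-!
Let `φ` vanish outside `[-R, R]`. The integrand `u_ε v_ε` of `w_ε` is supported where both
`|x + 1 - s| ≤ εR` and `|x - 1 + s| ≤ εR`, i.e. in the `εR`-box around the collision point
`(x, s) = (0, 1)` of the two characteristics; this gives (i). Scaling out the amplitudes, `w_ε = ε^{-(m+n)} J_ε` with
`J_ε(x,t) = ∫₀ᵗ Φ((x+1-s)/ε, (x-1+s)/ε) ds` and `Φ(a,b) = φ(a)^m φ(b)^n`. The function `J_ε` is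
Lipschitz uniformly in `ε`: differentiating `Φ` in `x` costs a factor `1/ε`, but the
`s`-integration only runs over an interval of length `2εR`. Hence `ε^r w_ε` and its derivative
are `O(ε^{r-m-n})`, and they tend to `0` in `C¹` for `r > m + n`.
-/

open Set Filter Topology Interval

theorem norm_intervalIntegral_le_of_forall_notMem_Icc {E : Type*} [NormedAddCommGroup E]
    [NormedSpace ℝ E] {f : ℝ → E} {a b C : ℝ} (hab : a ≤ b) (hC : ∀ s, ‖f s‖ ≤ C)
    (hf : ∀ s ∉ Icc a b, f s = 0) (u v : ℝ) : ‖∫ s in u..v, f s‖ ≤ C * (b - a) := by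
  have hC0 : 0 ≤ C := (norm_nonneg _).trans (hC a)
  rw [intervalIntegral.norm_integral_eq_norm_integral_uIoc,
    setIntegral_eq_of_subset_of_forall_sdiff_eq_zero measurableSet_uIoc
      (inter_subset_left (t := Icc a b)) fun s hs => hf s fun h => hs.2 ⟨hs.1, h⟩]
  calc ‖∫ s in Ι u v ∩ Icc a b, f s‖
      ≤ C * volume.real (Ι u v ∩ Icc a b) :=
        norm_setIntegral_le_of_norm_le_const
          ((measure_mono inter_subset_right).trans_lt measure_Icc_lt_top) fun s _ => hC s
    _ ≤ C * volume.real (Icc a b) := by gcongr; exacts [measure_Icc_lt_top.ne, inter_subset_right]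
    _ = C * (b - a) := by rw [Real.volume_real_Icc_of_le hab]

def crossingIntegral (Φ : ℝ × ℝ → ℝ) (ε : ℝ) (p : ℝ × ℝ) : ℝ :=
  ∫ s in (0:ℝ)..p.2, Φ ((p.1 + 1 - s) / ε, (p.1 - 1 + s) / ε)

section CrossingIntegral

variable {Φ : ℝ × ℝ → ℝ} {R S ε : ℝ}

theorem crossing_integrand_eq_zero (hΦ : ∀ p, R < ‖p‖ → Φ p = 0) (hε : 0 < ε) {x s : ℝ}
    (h : ε * R < |x| ∨ s ∉ Icc (1 - ε * R) (1 + ε * R)) :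
    Φ ((x + 1 - s) / ε, (x - 1 + s) / ε) = 0 := by
  refine hΦ _ (lt_of_not_ge fun hle => ?_)
  rw [Prod.norm_mk, max_le_iff, Real.norm_eq_abs, Real.norm_eq_abs, abs_div, abs_div,
    abs_of_pos hε, div_le_iff₀ hε, div_le_iff₀ hε, abs_le, abs_le] at hle
  rw [mem_Icc, lt_abs] at h
  rcases h with (h | h) | h
  · linarith
  · linarith
  · exact h ⟨by linarith, by linarith⟩

theorem crossingIntegral_eq_zero_of_lt_abs (hΦ : ∀ p, R < ‖p‖ → Φ p = 0) (hε : 0 < ε)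
    {p : ℝ × ℝ} (hp : ε * R < |p.1|) : crossingIntegral Φ ε p = 0 := by
  simp [crossingIntegral, crossing_integrand_eq_zero hΦ hε (Or.inl hp)]

theorem crossingIntegral_eq_zero_of_lt (hΦ : ∀ p, R < ‖p‖ → Φ p = 0) (hε : 0 < ε)
    {p : ℝ × ℝ} (hp₀ : 0 ≤ p.2) (hp : p.2 < 1 - ε * R) : crossingIntegral Φ ε p = 0 := by
  rw [crossingIntegral, intervalIntegral.integral_congr (g := fun _ => 0),
    intervalIntegral.integral_const, smul_zero]
  intro s hs
  rw [uIcc_of_le hp₀] at hs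
  exact crossing_integrand_eq_zero hΦ hε (Or.inr fun h => by linarith [hs.2, h.1])

theorem abs_crossingIntegral_le (hR : 0 ≤ R) (hΦ : ∀ p, R < ‖p‖ → Φ p = 0)
    (hS : ∀ p, |Φ p| ≤ S) (hε : 0 < ε) (p : ℝ × ℝ) :
    |crossingIntegral Φ ε p| ≤ S * (2 * ε * R) := by
  have h := norm_intervalIntegral_le_of_forall_notMem_Icc
    (f := fun s => Φ ((p.1 + 1 - s) / ε, (p.1 - 1 + s) / ε)) (by nlinarith) (fun s => hS _)
    (fun s hs => crossing_integrand_eq_zero hΦ hε (Or.inr hs)) 0 p.2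
  rw [Real.norm_eq_abs] at h
  exact h.trans_eq (by ring)

theorem abs_crossingIntegral_sub_le_of_snd_eq (hR : 0 ≤ R) (hΦ : ∀ p, R < ‖p‖ → Φ p = 0)
    {L : NNReal} (hL : LipschitzWith L Φ) (hε : 0 < ε) (x x' t : ℝ) :
    |crossingIntegral Φ ε (x, t) - crossingIntegral Φ ε (x', t)| ≤ 2 * L * R * |x - x'| := by
  have hcont (y : ℝ) : Continuous fun s => Φ ((y + 1 - s) / ε, (y - 1 + s) / ε) :=
    hL.continuous.comp (by fun_prop)
  have hdist (s : ℝ) : dist ((x + 1 - s) / ε, (x - 1 + s) / ε) ((x' + 1 - s) / ε, (x' - 1 + s) / ε)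
      = |x - x'| / ε := by
    rw [Prod.dist_eq, Real.dist_eq, Real.dist_eq, ← sub_div, ← sub_div,
      show x + 1 - s - (x' + 1 - s) = x - x' by ring,
      show x - 1 + s - (x' - 1 + s) = x - x' by ring, max_self, abs_div, abs_of_pos hε]
  have h := norm_intervalIntegral_le_of_forall_notMem_Icc (C := L * (|x - x'| / ε))
    (f := fun s => Φ ((x + 1 - s) / ε, (x - 1 + s) / ε) - Φ ((x' + 1 - s) / ε, (x' - 1 + s) / ε))
    (a := 1 - ε * R) (b := 1 + ε * R) (by nlinarith)
    (fun s => by rw [← dist_eq_norm, ← hdist s]; exact hL.dist_le_mul _ _)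
    (fun s hs => by
      rw [crossing_integrand_eq_zero hΦ hε (Or.inr hs),
        crossing_integrand_eq_zero hΦ hε (Or.inr hs), sub_zero]) 0 t
  rw [Real.norm_eq_abs, intervalIntegral.integral_sub ((hcont x).intervalIntegrable _ _)
    ((hcont x').intervalIntegrable _ _)] at h
  calc _ ≤ L * (|x - x'| / ε) * (1 + ε * R - (1 - ε * R)) := h
    _ = 2 * L * R * |x - x'| := by field_simp; ring

theorem abs_crossingIntegral_sub_le_of_fst_eq (hΦc : Continuous Φ) (hS : ∀ p, |Φ p| ≤ S)
    (x t t' : ℝ) :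
    |crossingIntegral Φ ε (x, t) - crossingIntegral Φ ε (x, t')| ≤ S * |t - t'| := by
  have hcont : Continuous fun s => Φ ((x + 1 - s) / ε, (x - 1 + s) / ε) :=
    hΦc.comp (by fun_prop)
  rw [crossingIntegral, crossingIntegral, intervalIntegral.integral_interval_sub_left
    (hcont.intervalIntegrable _ _) (hcont.intervalIntegrable _ _), ← Real.norm_eq_abs]
  exact intervalIntegral.norm_integral_le_of_norm_le_const fun s _ => hS _

theorem abs_crossingIntegral_sub_le (hR : 0 ≤ R) (hΦ : ∀ p, R < ‖p‖ → Φ p = 0)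
    {L : NNReal} (hL : LipschitzWith L Φ) (hS : ∀ p, |Φ p| ≤ S) (hε : 0 < ε) (p q : ℝ × ℝ) :
    |crossingIntegral Φ ε p - crossingIntegral Φ ε q| ≤ (2 * L * R + S) * ‖p - q‖ := by
  have hS0 : 0 ≤ S := (abs_nonneg _).trans (hS 0)
  have h₁ : |p.1 - q.1| ≤ ‖p - q‖ := norm_fst_le (p - q)
  have h₂ : |p.2 - q.2| ≤ ‖p - q‖ := norm_snd_le (p - q)
  calc _ ≤ |crossingIntegral Φ ε (p.1, p.2) - crossingIntegral Φ ε (q.1, p.2)|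
        + |crossingIntegral Φ ε (q.1, p.2) - crossingIntegral Φ ε (q.1, q.2)| := abs_sub_le _ _ _
    _ ≤ 2 * L * R * |p.1 - q.1| + S * |p.2 - q.2| :=
        add_le_add (abs_crossingIntegral_sub_le_of_snd_eq hR hΦ hL hε _ _ _)
          (abs_crossingIntegral_sub_le_of_fst_eq hL.continuous hS _ _ _)
    _ ≤ 2 * L * R * ‖p - q‖ + S * ‖p - q‖ := by gcongr
    _ = (2 * L * R + S) * ‖p - q‖ := by ring

end CrossingIntegral

section Mollifier

variable {φ : ℝ → ℝ} {m n : ℕ}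

theorem IsMollifier.exists_pos_forall_lt_abs (hφ : IsMollifier φ) :
    ∃ R > 0, ∀ y, R < |y| → φ y = 0 := by
  obtain ⟨R, hR⟩ := hφ.2.1.isBounded.subset_closedBall 0
  refine ⟨max R 1, by positivity, fun y hy => image_eq_zero_of_notMem_tsupport fun hmem => ?_⟩
  have := hR hmem
  rw [Metric.mem_closedBall, Real.dist_eq, sub_zero] at this
  exact hy.not_ge (this.trans (le_max_left _ _))

def collisionProfile (φ : ℝ → ℝ) (m n : ℕ) (p : ℝ × ℝ) : ℝ :=
  φ p.1 ^ m * φ p.2 ^ n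

theorem wSol_eq (φ : ℝ → ℝ) (m n : ℕ) (ε : ℝ) (p : ℝ × ℝ) :
    wSol φ m n ε p = ε⁻¹ ^ (m + n) * crossingIntegral (collisionProfile φ m n) ε p := by
  rw [wSol, crossingIntegral, ← intervalIntegral.integral_const_mul]
  congr 1
  ext s
  simp only [uSol, vSol, scaled, collisionProfile, mul_pow, pow_add]
  ring

theorem collisionProfile_eq_zero {R : ℝ} (hφ : ∀ y, R < |y| → φ y = 0) (hm : m ≠ 0)
    (hn : n ≠ 0) (p : ℝ × ℝ) (hp : R < ‖p‖) : collisionProfile φ m n p = 0 := by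
  rw [Prod.norm_def, lt_max_iff, Real.norm_eq_abs, Real.norm_eq_abs] at hp
  rcases hp with h | h
  · simp [collisionProfile, hφ _ h, zero_pow hm]
  · simp [collisionProfile, hφ _ h, zero_pow hn]

theorem IsMollifier.contDiff_collisionProfile (hφ : IsMollifier φ) :
    ContDiff ℝ (⊤ : ℕ∞) (collisionProfile φ m n) :=
  ((hφ.1.comp contDiff_fst).pow m).mul ((hφ.1.comp contDiff_snd).pow n)

theorem IsMollifier.hasCompactSupport_collisionProfile (hφ : IsMollifier φ) (hm : m ≠ 0)
    (hn : n ≠ 0) : HasCompactSupport (collisionProfile φ m n) := by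
  obtain ⟨R, -, hR⟩ := hφ.exists_pos_forall_lt_abs
  exact HasCompactSupport.intro (isCompact_closedBall 0 R) fun p hp =>
    collisionProfile_eq_zero hR hm hn p (by simpa using hp)

end Mollifier

theorem eventually_mul_rpow_le {σ : ℝ} (hσ : 0 < σ) (C : ℝ) {δ : ℝ} (hδ : 0 < δ) :
    ∀ᶠ ε in 𝓝[>] 0, C * ε ^ σ ≤ δ := by
  have h : Tendsto (fun ε : ℝ => C * ε ^ σ) (𝓝[>] 0) (𝓝 0) := by
    simpa [Real.zero_rpow hσ.ne'] using
      ((Real.continuousAt_rpow_const 0 σ (Or.inr hσ.le)).tendsto.const_mul C).mono_left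
        nhdsWithin_le_nhds
  exact (h.eventually (gt_mem_nhds hδ)).mono fun _ => le_of_lt

section Estimates

variable {φ : ℝ → ℝ} {m n : ℕ} {R S ε : ℝ} {L : NNReal}

theorem abs_rpow_mul_wSol_le (hR : 0 ≤ R)
    (hΦ : ∀ p, R < ‖p‖ → collisionProfile φ m n p = 0) (hS : ∀ p, |collisionProfile φ m n p| ≤ S)
    (hε : 0 < ε) (r : ℝ) (q : ℝ × ℝ) :
    |ε ^ r * wSol φ m n ε q| ≤ 2 * S * R * ε ^ (r - (m + n : ℕ) + 1) := by
  rw [wSol_eq, ← mul_assoc, abs_mul, Real.rpow_add_one hε.ne', Real.rpow_sub_natCast hε.ne',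
    inv_pow, ← div_eq_mul_inv, abs_of_nonneg (by positivity)]
  calc _ ≤ ε ^ r / ε ^ (m + n) * (S * (2 * ε * R)) := by
        gcongr; exact abs_crossingIntegral_le hR hΦ hS hε q
    _ = _ := by ring

theorem norm_rpow_smul_fderiv_wSol_le (hR : 0 ≤ R)
    (hΦ : ∀ p, R < ‖p‖ → collisionProfile φ m n p = 0)
    (hL : LipschitzWith L (collisionProfile φ m n))
    (hS : ∀ p, |collisionProfile φ m n p| ≤ S) (hε : 0 < ε) (r : ℝ) (q : ℝ × ℝ) :
    ‖ε ^ r • fderiv ℝ (wSol φ m n ε) q‖ ≤ (2 * L * R + S) * ε ^ (r - (m + n : ℕ)) := by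
  have hS0 : 0 ≤ S := (abs_nonneg _).trans (hS 0)
  have hlip : ‖fderiv ℝ (wSol φ m n ε) q‖ ≤ ε⁻¹ ^ (m + n) * (2 * L * R + S) := by
    refine norm_fderiv_le_of_lip' ℝ (by positivity) (Eventually.of_forall fun p => ?_)
    rw [wSol_eq, wSol_eq, ← mul_sub, Real.norm_eq_abs, abs_mul, abs_of_nonneg (by positivity),
      mul_assoc]
    gcongr
    exact abs_crossingIntegral_sub_le hR hΦ hL hS hε p q
  rw [norm_smul, Real.norm_eq_abs, abs_of_nonneg (by positivity), Real.rpow_sub_natCast hε.ne']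
  calc _ ≤ ε ^ r * (ε⁻¹ ^ (m + n) * (2 * L * R + S)) := by gcongr
    _ = _ := by rw [inv_pow]; ring

theorem eventually_abs_rpow_mul_wSol_le_and_norm_rpow_smul_fderiv_wSol_le (hR : 0 ≤ R)
    (hΦ : ∀ p, R < ‖p‖ → collisionProfile φ m n p = 0)
    (hL : LipschitzWith L (collisionProfile φ m n))
    (hS : ∀ p, |collisionProfile φ m n p| ≤ S) {r : ℝ} (hr : (m + n : ℝ) < r) {δ : ℝ}
    (hδ : 0 < δ) :
    ∀ᶠ ε in 𝓝[>] 0, ∀ q, |ε ^ r * wSol φ m n ε q| ≤ δ ∧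
      ‖ε ^ r • fderiv ℝ (wSol φ m n ε) q‖ ≤ δ := by
  have hσ : 0 < r - (m + n : ℕ) := by push_cast; linarith
  filter_upwards [eventually_mul_rpow_le (hσ.trans (lt_add_one _)) (2 * S * R) hδ,
    eventually_mul_rpow_le hσ (2 * L * R + S) hδ, self_mem_nhdsWithin]
    with ε hval hder hε q
  exact ⟨(abs_rpow_mul_wSol_le hR hΦ hS hε r q).trans hval,
    (norm_rpow_smul_fderiv_wSol_le hR hΦ hL hS hε r q).trans hder⟩

theorem exists_isOpen_forall_wSol_eq_zero (hR : 0 < R)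
    (hΦ : ∀ p, R < ‖p‖ → collisionProfile φ m n p = 0) {p : ℝ × ℝ} (hp : p.1 ≠ 0 ∨ p.2 < 1) :
    ∃ U : Set (ℝ × ℝ), IsOpen U ∧ p ∈ U ∧ ∃ ε₀ > (0:ℝ), ∀ ε : ℝ, 0 < ε → ε < ε₀ →
      ∀ q ∈ U ∩ HalfPlane, wSol φ m n ε q = 0 := by
  rcases hp with hx | ht
  · refine ⟨{q | |p.1| / 2 < |q.1|}, isOpen_lt continuous_const (by fun_prop),
      half_lt_self (abs_pos.2 hx), |p.1| / 2 / R, by positivity, fun ε hε hε₀ q hq => ?_⟩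
    rw [lt_div_iff₀ hR] at hε₀
    rw [wSol_eq, crossingIntegral_eq_zero_of_lt_abs hΦ hε (hε₀.trans hq.1), mul_zero]
  · have h₀ : 0 < (1 - p.2) / 2 := by linarith
    refine ⟨{q | q.2 < (1 + p.2) / 2}, isOpen_lt continuous_snd continuous_const,
      show p.2 < (1 + p.2) / 2 by linarith, (1 - p.2) / 2 / R, by positivity,
      fun ε hε hε₀ q hq => ?_⟩
    rw [lt_div_iff₀ hR] at hε₀
    rw [wSol_eq, crossingIntegral_eq_zero_of_lt hΦ hε hq.2 (by linarith [hq.1.out]), mul_zero]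

end Estimates

/-- For the explicit solution of the Rauch–Reed `3×3` system with
initial data `δ^m(x+1)` and `δ^n(x−1)`: (i) `w_ε` vanishes, for small `ε`, on a
(relative) neighbourhood of every point `(x,t)` with `x ≠ 0`, `t ≥ 0`, and of every
point `(0,t)` with `0 ≤ t < 1`; (ii) for `t ≥ 1` the `C^1`-singular spectrum of `w`
at `(0,t)` is contained in `[0, m+n]`: for every `r > m+n` some `ε^r·w_ε` converges in
`C^1` near `(0,t)` to a `C^1` function. -/
theorem stmt19 (m n : ℕ) (hm : 1 ≤ m) (hn : 1 ≤ n)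
    (φ : ℝ → ℝ) (hφ : IsMollifier φ) :
    -- (i)
    (∀ p : ℝ × ℝ, 0 ≤ p.2 → (p.1 ≠ 0 ∨ p.2 < 1) →
      ∃ U : Set (ℝ × ℝ), IsOpen U ∧ p ∈ U ∧
        ∃ ε₀ > (0:ℝ), ∀ ε : ℝ, 0 < ε → ε < ε₀ →
          ∀ q ∈ U ∩ HalfPlane, wSol φ m n ε q = 0) ∧
    -- (ii)
    (∀ t : ℝ, 1 ≤ t → ∀ r : ℝ, (m + n : ℝ) < r →
      ∃ U : Set (ℝ × ℝ), IsOpen U ∧ ((0:ℝ), t) ∈ U ∧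
        ∃ g : ℝ × ℝ → ℝ, ContDiffOn ℝ 1 g (U ∩ HalfPlane) ∧
          ∀ K ⊆ U ∩ HalfPlane, IsCompact K → ∀ δ > (0:ℝ), ∃ ε₀ > (0:ℝ),
            ∀ ε : ℝ, 0 < ε → ε < ε₀ → ∀ q ∈ K,
              |ε ^ r * wSol φ m n ε q - g q| ≤ δ ∧
              ‖ε ^ r • fderivWithin ℝ (wSol φ m n ε) (U ∩ HalfPlane) q -
                  fderivWithin ℝ g (U ∩ HalfPlane) q‖ ≤ δ) := by
  obtain ⟨R, hR, hφR⟩ := hφ.exists_pos_forall_lt_abs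
  have hΦ := collisionProfile_eq_zero hφR (m := m) (n := n) (by omega) (by omega)
  have hcs := hφ.hasCompactSupport_collisionProfile (m := m) (n := n) (by omega) (by omega)
  obtain ⟨L, hL⟩ := hφ.contDiff_collisionProfile.lipschitzWith_of_hasCompactSupport hcs (by simp)
  obtain ⟨S, hS⟩ := hcs.exists_bound_of_continuous hφ.contDiff_collisionProfile.continuous
  refine ⟨fun p _ hp => exists_isOpen_forall_wSol_eq_zero hR hΦ hp, fun t ht r hr => ?_⟩
  -- an open `U ⊆ HalfPlane`, on which `fderivWithin` is `fderiv`
  have hU : IsOpen {q : ℝ × ℝ | 0 < q.2} := isOpen_lt continuous_const continuous_snd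
  have hUH : {q : ℝ × ℝ | 0 < q.2} ∩ HalfPlane = {q | 0 < q.2} :=
    inter_eq_left.2 fun q hq => show 0 ≤ q.2 from hq.le
  refine ⟨_, hU, show (0:ℝ) < t by linarith, fun _ => 0, contDiffOn_const, ?_⟩
  rw [hUH]
  intro K hK _ δ hδ
  obtain ⟨ε₀, hε₀, hsmall⟩ := (nhdsGT_basis 0).eventually_iff.1
    (eventually_abs_rpow_mul_wSol_le_and_norm_rpow_smul_fderiv_wSol_le hR.le hΦ hL hS hr hδ)
  refine ⟨ε₀, hε₀, fun ε hε hεε₀ q hq => ?_⟩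
  rw [sub_zero, fderivWithin_const_apply, sub_zero, fderivWithin_of_isOpen hU (hK hq)]
  exact hsmall ⟨hε, hεε₀⟩ q

end
end
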